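/- Let p0, p1, p2 ∈ R_{2,1} have no common zeros on P^1 × P^1. If p0, p1, p2 are generic, then Syz(p)_{2,n} = 0 for all n ≥ 3. -/

import Mathlib

open MvPolynomial

noncomputable section

/-- The bigraded polynomial ring `R = k[x,y,z,w]`; variables `0,1,2,3` are `x,y,z,w`. -/
abbrev Rk (k : Type*) [Field k] := MvPolynomial (Fin 4) k

/-- The bigrading: `x, y` have degree `(1,0)`; `z, w` have degree `(0,1)`. -/
def bidegWt : Fin 4 → ℤ × ℤ := ![(1, 0), (1, 0), (0, 1), (0, 1)]

/-- `p` is bihomogeneous of bidegree `(m, n)` (with the convention that only the zero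
polynomial is bihomogeneous of a bidegree with a negative coordinate). -/
def Bihom {k : Type*} [Field k] (p : Rk k) (m n : ℤ) : Prop :=
  p.IsWeightedHomogeneous bidegWt (m, n)

/-- `p0, p1, p2` have no common zeros on `ℙ¹ × ℙ¹`. -/
def NoCommonZeros {k : Type*} [Field k] (p0 p1 p2 : Rk k) : Prop :=
  ∀ a b c d : k, (a, b) ≠ (0, 0) → (c, d) ≠ (0, 0) →
    eval ![a, b, c, d] p0 ≠ 0 ∨ eval ![a, b, c, d] p1 ≠ 0 ∨ eval ![a, b, c, d] p2 ≠ 0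

/-- The map `(A0, A1, A2) ↦ A0 p0 + A1 p1 + A2 p2`, as a `k`-linear map on `R³`. -/
def syzMapk {k : Type*} [Field k] (p : Fin 3 → Rk k) : (Fin 3 → Rk k) →ₗ[k] Rk k :=
  ∑ i : Fin 3, (LinearMap.mulRight k (p i)).comp (LinearMap.proj i)

/-- The bigraded piece `Syz(p)_{m,n}`: triples `(A0, A1, A2)` of bihomogeneous polynomials of
bidegree `(m-2, n-1)` with `A0 p0 + A1 p1 + A2 p2 = 0`, as a `k`-subspace of `R³`. -/
def SyzPiece {k : Type*} [Field k] (p : Fin 3 → Rk k) (m n : ℤ) :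
    Submodule k (Fin 3 → Rk k) :=
  (Submodule.pi Set.univ fun _ => weightedHomogeneousSubmodule k bidegWt (m - 2, n - 1)) ⊓
    LinearMap.ker (syzMapk p)

/-- The syzygy module `Syz(p)`, as an `R`-submodule of `R³`. -/
def Syz {k : Type*} [Field k] (p : Fin 3 → Rk k) : Submodule (Rk k) (Fin 3 → Rk k) :=
  LinearMap.ker (∑ i : Fin 3, (LinearMap.mulRight (Rk k) (p i)).comp (LinearMap.proj i))

/-- The Koszul submodule of `R³`: the `R`-submodule generated by the three Koszul syzygies
`(p1, −p0, 0)`, `(p2, 0, −p0)`, `(0, p2, −p1)`. -/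
def KoszulSub {k : Type*} [Field k] (p0 p1 p2 : Rk k) : Submodule (Rk k) (Fin 3 → Rk k) :=
  Submodule.span (Rk k) {![p1, -p0, 0], ![p2, 0, -p0], ![0, p2, -p1]}

/-- `p0, p1, p2 ∈ R_{2,1}` are generic: only finitely many points `[a0 : a1 : a2]` of `ℙ²(k)`
are such that `a0 p0 + a1 p1 + a2 p2` factors as `q · l` with `q ∈ R_{2,0}`, `l ∈ R_{0,1}`. -/
def BidegGeneric {k : Type*} [Field k] (p0 p1 p2 : Rk k) : Prop :=
  {P : Projectivization k (Fin 3 → k) |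
    ∃ q l : Rk k, Bihom q 2 0 ∧ Bihom l 0 1 ∧
      P.rep 0 • p0 + P.rep 1 • p1 + P.rep 2 • p2 = q * l}.Finite

/-!
A syzygy of bidegree `(2, n)` has entries `Aᵢ ∈ R_{0,n-1}`, binary forms in `z, w`. For every `t`
with `v(t) := A(x, y, 1, t) ≠ 0`, the form `∑ vᵢ(t) pᵢ ∈ R_{2,1}` vanishes on the line `w = t z`,
hence equals `q · (w - t z)`: the point `[v(t)]` is one of the finitely many exceptional points of
`ℙ²`. Infinitely many `t` then give the same point `[c]`, which forces `c_j Aᵢ = cᵢ A_j`, and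
`A_j · ∑ cᵢ pᵢ = c_j · ∑ Aᵢ pᵢ = 0` yields the linear relation `∑ cᵢ pᵢ = 0`. This is impossible
without common zeros: two forms `P = a z + b w`, `Q = c z + d w` of bidegree `(2, 1)` always have a
common zero, namely a root `(x : y)` of the binary quartic `a d - b c` together with a kernel vector
`(z : w)` of the then singular matrix `(a, b; c, d)`.
-/

theorem Polynomial.exists_smul_eq_smul_of_finite_mk {k ι : Type*} [Field k] [Infinite k]
    [Fintype ι] {f : ι → Polynomial k} (hf : f ≠ 0) {S : Set (Projectivization k (ι → k))}
    (hS : S.Finite)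
    (hfS : ∀ t (ht : (fun i => (f i).eval t) ≠ 0), Projectivization.mk k _ ht ∈ S) :
    ∃ c : ι → k, c ≠ 0 ∧ ∀ i j, c j • f i = c i • f j := by
  set v : k → ι → k := fun t i => (f i).eval t
  obtain ⟨j₀, hj₀⟩ := Function.ne_iff.mp hf
  have hT : {t | v t ≠ 0}.Infinite :=
    (Polynomial.finite_setOfPred_isRoot hj₀).infinite_compl.mono
      fun t (ht : ¬(f j₀).IsRoot t) h0 => ht (congrFun h0 j₀)
  have hcover : {t | v t ≠ 0} ⊆ ⋃ P ∈ S, {t | ∃ a : k, v t = a • P.rep} := by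
    intro t ht
    obtain ⟨a, ha⟩ := Projectivization.exists_smul_eq_mk_rep k (v t) ht
    exact Set.mem_biUnion (hfS t ht)
      ⟨((a⁻¹ : kˣ) : k), by rw [← Units.smul_def, eq_inv_smul_iff, ha]⟩
  obtain ⟨P, -, hP⟩ : ∃ P ∈ S, {t | ∃ a : k, v t = a • P.rep}.Infinite := by
    by_contra! h
    exact hT ((hS.biUnion h).subset hcover)
  refine ⟨P.rep, P.rep_nonzero, fun i j => sub_eq_zero.mp
    (Polynomial.eq_zero_of_infinite_isRoot _ (hP.mono ?_))⟩
  rintro t ⟨a, ha⟩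
  have hi := congrFun ha i
  have hj := congrFun ha j
  simp only [v, Pi.smul_apply, smul_eq_mul] at hi hj
  simp only [Set.mem_ofPred_eq, Polynomial.IsRoot, Polynomial.eval_sub, Polynomial.eval_smul,
    smul_eq_mul, hi, hj]
  ring

theorem sum_smul_eq_zero_of_proportional {k R ι : Type*} [Field k] [CommRing R]
    [NoZeroDivisors R] [Algebra k R] [Fintype ι] {A p : ι → R} {c : ι → k} (hA : A ≠ 0)
    (hc : ∀ i j, c j • A i = c i • A j) (hsyz : ∑ i, A i * p i = 0) :
    ∑ i, c i • p i = 0 := by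
  obtain ⟨j, hj⟩ := Function.ne_iff.mp hA
  refine (mul_eq_zero.mp ?_).resolve_left hj
  calc A j * ∑ i, c i • p i = ∑ i, (c i • A j) * p i := by
        simp [Finset.mul_sum]
    _ = ∑ i, (c j • A i) * p i := by simp_rw [hc]
    _ = c j • ∑ i, A i * p i := by simp [Finset.smul_sum]
    _ = 0 := by rw [hsyz, smul_zero]

namespace MvPolynomial

variable {k σ : Type*} [Field k] [DecidableEq σ] (j : σ)

def dehomogenize : MvPolynomial σ k →ₐ[k] Polynomial k :=
  aeval (Function.update 1 j Polynomial.X)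

theorem eval_dehomogenize (p : MvPolynomial σ k) (t : k) :
    (dehomogenize j p).eval t = eval (Function.update 1 j t) p := by
  rw [dehomogenize, ← Polynomial.coe_aeval_eq_eval, comp_aeval_apply, ← aeval_eq_eval]
  congr 2
  funext i
  rcases eq_or_ne i j with rfl | hi <;> simp [*]

theorem coeff_dehomogenize {p : MvPolynomial σ k}
    (hp : Set.InjOn (fun d : σ →₀ ℕ => d j) p.support) {d : σ →₀ ℕ} (hd : d ∈ p.support) :
    (dehomogenize j p).coeff (d j) = p.coeff d := by
  have hmono : ∀ e : σ →₀ ℕ, dehomogenize j (monomial e (p.coeff e)) =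
      Polynomial.C (p.coeff e) * Polynomial.X ^ e j := by
    intro e
    rw [dehomogenize, aeval_monomial, Finsupp.prod, Finset.prod_eq_single j]
    · simp [Polynomial.algebraMap_eq]
    · intro i _ hi; simp [hi]
    · intro hj; simp [Finsupp.notMem_support_iff.mp hj]
  conv_lhs => rw [p.as_sum]
  rw [map_sum, Polynomial.finsetSum_coeff, Finset.sum_eq_single d]
  · simp [hmono]
  · intro e he hne
    rw [hmono, Polynomial.coeff_C_mul_X_pow, if_neg fun h => hne (hp hd he h).symm]
  · exact fun h => absurd hd h

theorem dehomogenize_ne_zero {p : MvPolynomial σ k}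
    (hp : Set.InjOn (fun d : σ →₀ ℕ => d j) p.support) (hp0 : p ≠ 0) :
    dehomogenize j p ≠ 0 := by
  obtain ⟨d, hd⟩ := ne_zero_iff.mp hp0
  intro h
  have := coeff_dehomogenize j hp (mem_support_iff.mpr hd)
  simp_all

end MvPolynomial

section Bigraded

variable {k : Type*} [Field k]

theorem weight_bidegWt (d : Fin 4 →₀ ℕ) :
    Finsupp.weight bidegWt d = (((d 0 + d 1 : ℕ) : ℤ), ((d 2 + d 3 : ℕ) : ℤ)) := by
  simp [Finsupp.weight_eq_sum, Fin.sum_univ_four, bidegWt, Prod.ext_iff]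

namespace Bihom

variable {p q : Rk k} {m n m' n' : ℤ}

theorem exponents_eq (hp : Bihom p m n) {d : Fin 4 →₀ ℕ} (hd : d ∈ p.support) :
    ((d 0 + d 1 : ℕ) : ℤ) = m ∧ ((d 2 + d 3 : ℕ) : ℤ) = n := by
  simpa [weight_bidegWt] using hp (mem_support_iff.mp hd)

theorem add (hp : Bihom p m n) (hq : Bihom q m n) : Bihom (p + q) m n :=
  IsWeightedHomogeneous.add hp hq

theorem sub (hp : Bihom p m n) (hq : Bihom q m n) : Bihom (p - q) m n :=
  Submodule.sub_mem (weightedHomogeneousSubmodule k bidegWt (m, n)) hp hq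

theorem smul (hp : Bihom p m n) (c : k) : Bihom (c • p) m n :=
  Submodule.smul_mem (weightedHomogeneousSubmodule k bidegWt (m, n)) c hp

theorem mul (hp : Bihom p m n) (hq : Bihom q m' n') : Bihom (p * q) (m + m') (n + n') :=
  IsWeightedHomogeneous.mul hp hq

theorem pderiv_zw (hp : Bihom p m 1) {i : Fin 4} (hi : i = 2 ∨ i = 3) :
    Bihom (pderiv i p) m 0 := by
  refine IsWeightedHomogeneous.pderiv hp ?_
  rcases hi with rfl | rfl <;> simp [bidegWt]

theorem eval_congr_xy (hp : Bihom p m 0) {v v' : Fin 4 → k} (h0 : v 0 = v' 0)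
    (h1 : v 1 = v' 1) : eval v p = eval v' p := by
  refine eval₂_congr _ _ _ fun {i d} hi hd => ?_
  have := (hp.exponents_eq (mem_support_iff.mpr hd)).2
  rw [Finsupp.mem_support_iff] at hi
  fin_cases i <;> simp_all <;> omega

theorem eval_congr_zw (hp : Bihom p 0 n) {v v' : Fin 4 → k} (h2 : v 2 = v' 2)
    (h3 : v 3 = v' 3) : eval v p = eval v' p := by
  refine eval₂_congr _ _ _ fun {i d} hi hd => ?_
  have := (hp.exponents_eq (mem_support_iff.mpr hd)).1
  rw [Finsupp.mem_support_iff] at hi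
  fin_cases i <;> simp_all <;> omega

theorem injOn_support_apply_one (hp : Bihom p m 0) :
    Set.InjOn (fun d : Fin 4 →₀ ℕ => d 1) p.support := by
  intro d hd d' hd' h
  have := hp.exponents_eq hd
  have := hp.exponents_eq hd'
  ext i
  fin_cases i <;> simp_all <;> omega

theorem injOn_support_apply_three (hp : Bihom p 0 n) :
    Set.InjOn (fun d : Fin 4 →₀ ℕ => d 3) p.support := by
  intro d hd d' hd' h
  have := hp.exponents_eq hd
  have := hp.exponents_eq hd'
  ext i
  fin_cases i <;> simp_all <;> omega

theorem eq_X_mul_pderiv_add (hp : Bihom p m 1) :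
    p = X 2 * pderiv 2 p + X 3 * pderiv 3 p := by
  have hzw : p.IsWeightedHomogeneous ![0, 0, 1, 1] 1 := by
    intro d hd
    have := (hp.exponents_eq (mem_support_iff.mpr hd)).2
    simp [Finsupp.weight_eq_sum, Fin.sum_univ_four]
    omega
  simpa [Fin.sum_univ_four] using hzw.sum_weight_X_mul_pderiv.symm

theorem eval_eq (hp : Bihom p m 1) (a b c d : k) :
    eval ![a, b, c, d] p =
      c * eval ![a, b, 0, 0] (pderiv 2 p) + d * eval ![a, b, 0, 0] (pderiv 3 p) := by
  conv_lhs => rw [hp.eq_X_mul_pderiv_add]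
  rw [map_add, map_mul, map_mul, eval_X, eval_X,
    (hp.pderiv_zw (.inl rfl)).eval_congr_xy (v := ![a, b, c, d]) (v' := ![a, b, 0, 0]) rfl rfl,
    (hp.pderiv_zw (.inr rfl)).eval_congr_xy (v := ![a, b, c, d]) (v' := ![a, b, 0, 0]) rfl rfl]
  rfl

theorem exists_eval_eq_zero [IsAlgClosed k] (hp : Bihom p m 0) (hm : 0 < m) :
    ∃ a b : k, (a, b) ≠ (0, 0) ∧ ∀ c d : k, eval ![a, b, c, d] p = 0 := by
  -- Either `p(1, t)` has positive degree in `t`, or `p = c xᵐ` vanishes at `(0 : 1)`.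
  by_cases hy : ∃ e ∈ p.support, e 1 ≠ 0
  · obtain ⟨e, he, he1⟩ := hy
    have hcoeff := coeff_dehomogenize 1 hp.injOn_support_apply_one he
    have hdeg : (dehomogenize 1 p).degree ≠ 0 := by
      intro h0
      have := Polynomial.le_degree_of_ne_zero (hcoeff ▸ mem_support_iff.mp he)
      rw [h0] at this
      have : e 1 ≤ 0 := by exact_mod_cast this
      omega
    obtain ⟨t, ht⟩ := IsAlgClosed.exists_root _ hdeg
    refine ⟨1, t, by simp, fun c d => ?_⟩
    rw [Polynomial.IsRoot, eval_dehomogenize] at ht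
    rw [← ht]
    exact hp.eval_congr_xy (by simp) (by simp)
  · push Not at hy
    refine ⟨0, 1, by simp, fun c d => ?_⟩
    rw [eval_eq']
    refine Finset.sum_eq_zero fun e he => ?_
    have h0 : e 0 ≠ 0 := by
      have := hp.exponents_eq he
      have := hy e he
      omega
    rw [Finset.prod_eq_zero (Finset.mem_univ 0) (by simp [h0]), mul_zero]

end Bihom

variable {m : ℤ}

theorem exists_common_zero [IsAlgClosed k] (hm : 0 < m) {P Q : Rk k} (hP : Bihom P m 1)
    (hQ : Bihom Q m 1) :
    ∃ a b c d : k, (a, b) ≠ (0, 0) ∧ (c, d) ≠ (0, 0) ∧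
      eval ![a, b, c, d] P = 0 ∧ eval ![a, b, c, d] Q = 0 := by
  have hdet : Bihom (pderiv 2 P * pderiv 3 Q - pderiv 3 P * pderiv 2 Q) (m + m) 0 := by
    have := ((hP.pderiv_zw (.inl rfl)).mul (hQ.pderiv_zw (.inr rfl))).sub
      ((hP.pderiv_zw (.inr rfl)).mul (hQ.pderiv_zw (.inl rfl)))
    rwa [add_zero] at this
  obtain ⟨a, b, hab, hroot⟩ := hdet.exists_eval_eq_zero (by omega)
  let M : Matrix (Fin 2) (Fin 2) k := Matrix.of ![
    ![eval ![a, b, 0, 0] (pderiv 2 P), eval ![a, b, 0, 0] (pderiv 3 P)],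
    ![eval ![a, b, 0, 0] (pderiv 2 Q), eval ![a, b, 0, 0] (pderiv 3 Q)]]
  have hM : M.det = 0 := by
    have := hroot 0 0
    simp only [map_sub, map_mul] at this
    rw [Matrix.det_fin_two_of]
    linear_combination this
  obtain ⟨w, hw0, hw⟩ := Matrix.exists_mulVec_eq_zero_iff.mpr hM
  have hwP := congrFun hw 0
  have hwQ := congrFun hw 1
  simp [M, Matrix.mulVec, dotProduct, Fin.sum_univ_two] at hwP hwQ
  refine ⟨a, b, w 0, w 1, hab, fun h => hw0 ?_, ?_, ?_⟩
  · simp only [Prod.mk.injEq] at h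
    ext i
    fin_cases i <;> simp [h]
  · rw [hP.eval_eq]
    linear_combination hwP
  · rw [hQ.eval_eq]
    linear_combination hwQ

namespace NoCommonZeros

variable {p0 p1 p2 : Rk k}

theorem rotate (h : NoCommonZeros p0 p1 p2) : NoCommonZeros p1 p2 p0 :=
  fun a b c d hab hcd => by have := h a b c d hab hcd; tauto

theorem coeff_eq_zero_of_smul_add [IsAlgClosed k] (h : NoCommonZeros p0 p1 p2) (hm : 0 < m)
    (h1 : Bihom p1 m 1) (h2 : Bihom p2 m 1) {c0 c1 c2 : k}
    (hc : c0 • p0 + c1 • p1 + c2 • p2 = 0) : c0 = 0 := by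
  obtain ⟨a, b, c, d, hab, hcd, hz1, hz2⟩ := exists_common_zero hm h1 h2
  have hz := congrArg (eval ![a, b, c, d]) hc
  simp only [map_add, smul_eval, hz1, hz2, map_zero, mul_zero, add_zero] at hz
  have hz0 : eval ![a, b, c, d] p0 ≠ 0 := by
    have := h a b c d hab hcd
    tauto
  exact (mul_eq_zero.mp hz).resolve_right hz0

theorem linearIndependent [IsAlgClosed k] (h : NoCommonZeros p0 p1 p2) (hm : 0 < m)
    (h0 : Bihom p0 m 1) (h1 : Bihom p1 m 1) (h2 : Bihom p2 m 1) :
    LinearIndependent k ![p0, p1, p2] := by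
  rw [Fintype.linearIndependent_iff]
  intro c hc
  simp only [Fin.sum_univ_three, Matrix.cons_val_zero, Matrix.cons_val_one,
    Matrix.cons_val_two, Matrix.head_cons, Matrix.tail_cons] at hc
  have hc0 := h.coeff_eq_zero_of_smul_add hm h1 h2 hc
  have hc1 := h.rotate.coeff_eq_zero_of_smul_add hm h2 h0 (c2 := c 0) (by rw [← hc]; abel)
  have hc2 := h.rotate.rotate.coeff_eq_zero_of_smul_add hm h0 h1 (c1 := c 0) (by rw [← hc]; abel)
  intro i
  fin_cases i <;> assumption

end NoCommonZeros

def HasLinearFactor (m : ℤ) (G : Rk k) : Prop :=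
  ∃ q l : Rk k, Bihom q m 0 ∧ Bihom l 0 1 ∧ G = q * l

theorem HasLinearFactor.smul {G : Rk k} (h : HasLinearFactor m G) (c : k) :
    HasLinearFactor m (c • G) := by
  obtain ⟨q, l, hq, hl, rfl⟩ := h
  exact ⟨c • q, l, hq.smul c, hl, (smul_mul_assoc c q l).symm⟩

theorem Bihom.hasLinearFactor_of_eval_eq_zero [Infinite k] {G : Rk k} (hG : Bihom G m 1)
    (t : k) (h : ∀ x y : k, eval ![x, y, 1, t] G = 0) : HasLinearFactor m G := by
  have key : pderiv 2 G + t • pderiv 3 G = 0 := by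
    refine MvPolynomial.funext fun v => ?_
    have hv := hG.eval_eq (v 0) (v 1) 1 t
    rw [h] at hv
    rw [map_add, smul_eval, map_zero,
      (hG.pderiv_zw (.inl rfl)).eval_congr_xy (v := v) (v' := ![v 0, v 1, 0, 0]) rfl rfl,
      (hG.pderiv_zw (.inr rfl)).eval_congr_xy (v := v) (v' := ![v 0, v 1, 0, 0]) rfl rfl]
    linear_combination -hv
  have hX2 : Bihom (X 2 : Rk k) 0 1 := isWeightedHomogeneous_X k bidegWt 2
  have hX3 : Bihom (X 3 : Rk k) 0 1 := isWeightedHomogeneous_X k bidegWt 3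
  refine ⟨pderiv 3 G, X 3 - t • X 2, hG.pderiv_zw (.inr rfl), hX3.sub (hX2.smul t), ?_⟩
  rw [smul_eq_C_mul] at key ⊢
  linear_combination hG.eq_X_mul_pderiv_add + X 2 * key

theorem mk_mem_setOf_hasLinearFactor {p : Fin 3 → Rk k} {v : Fin 3 → k} (hv : v ≠ 0)
    (h : HasLinearFactor m (∑ i, v i • p i)) :
    Projectivization.mk k v hv ∈
      {P : Projectivization k (Fin 3 → k) | HasLinearFactor m (∑ i, P.rep i • p i)} := by
  obtain ⟨a, ha⟩ := Projectivization.exists_smul_eq_mk_rep k v hv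
  simp only [Set.mem_ofPred_eq, ← ha, Pi.smul_apply, Units.smul_def, smul_eq_mul, mul_smul,
    ← Finset.smul_sum]
  exact h.smul _

theorem hasLinearFactor_of_syzygy [Infinite k] {p A : Fin 3 → Rk k} {N : ℤ}
    (hp : ∀ i, Bihom (p i) m 1) (hA : ∀ i, Bihom (A i) 0 N) (hsyz : ∑ i, A i * p i = 0)
    (t : k) : HasLinearFactor m (∑ i, eval (Function.update 1 3 t) (A i) • p i) := by
  refine Bihom.hasLinearFactor_of_eval_eq_zero ?_ t fun x y => ?_
  · exact Finset.sum_induction _ (Bihom · m 1) (fun _ _ => Bihom.add)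
      (isWeightedHomogeneous_zero _ _ _) fun i _ => (hp i).smul _
  · have hAi : ∀ i, eval (Function.update 1 3 t) (A i) = eval ![x, y, 1, t] (A i) :=
      fun i => (hA i).eval_congr_zw (by simp) (by simp)
    simpa [map_sum, smul_eval, hAi] using congrArg (eval ![x, y, 1, t]) hsyz

theorem exists_proportional_of_syzygy [Infinite k] {p A : Fin 3 → Rk k} {N : ℤ}
    (hp : ∀ i, Bihom (p i) m 1)
    (hgen : {P : Projectivization k (Fin 3 → k) |
      HasLinearFactor m (∑ i, P.rep i • p i)}.Finite)
    (hA : ∀ i, Bihom (A i) 0 N) (hsyz : ∑ i, A i * p i = 0) (hA0 : A ≠ 0) :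
    ∃ c : Fin 3 → k, c ≠ 0 ∧ ∀ i j, c j • A i = c i • A j := by
  have hf : (fun i => dehomogenize 3 (A i)) ≠ 0 := by
    obtain ⟨j, hj⟩ := Function.ne_iff.mp hA0
    exact Function.ne_iff.mpr ⟨j, dehomogenize_ne_zero 3 (hA j).injOn_support_apply_three hj⟩
  obtain ⟨c, hc0, hc⟩ := Polynomial.exists_smul_eq_smul_of_finite_mk hf hgen fun t ht =>
    mk_mem_setOf_hasLinearFactor ht
      (by simpa only [eval_dehomogenize] using hasLinearFactor_of_syzygy hp hA hsyz t)
  refine ⟨c, hc0, fun i j => sub_eq_zero.mp (by_contra fun hne => ?_)⟩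
  exact dehomogenize_ne_zero 3 (((hA i).smul _).sub ((hA j).smul _)).injOn_support_apply_three
    hne (by simp [hc i j])

theorem mem_syzPiece_iff {p A : Fin 3 → Rk k} {m n : ℤ} :
    A ∈ SyzPiece p m n ↔ (∀ i, Bihom (A i) (m - 2) (n - 1)) ∧ ∑ i, A i * p i = 0 := by
  simp [SyzPiece, syzMapk, Submodule.mem_pi, mem_weightedHomogeneousSubmodule, Bihom]

theorem BidegGeneric.finite_setOf_hasLinearFactor {p0 p1 p2 : Rk k}
    (h : BidegGeneric p0 p1 p2) :
    {P : Projectivization k (Fin 3 → k) |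
      HasLinearFactor 2 (∑ i, P.rep i • ![p0, p1, p2] i)}.Finite := by
  simpa only [BidegGeneric, HasLinearFactor, Fin.sum_univ_three, Matrix.cons_val_zero,
    Matrix.cons_val_one, Matrix.cons_val_two, Matrix.head_cons, Matrix.tail_cons] using h

end Bigraded

/-- In the generic case, `Syz(p)_{2,n} = 0` for all `n ≥ 3`. -/
theorem statement5 {k : Type*} [Field k] [IsAlgClosed k] (p0 p1 p2 : Rk k)
    (h0 : Bihom p0 2 1) (h1 : Bihom p1 2 1) (h2 : Bihom p2 2 1)
    (hncz : NoCommonZeros p0 p1 p2) (hgen : BidegGeneric p0 p1 p2) :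
    ∀ n : ℤ, 3 ≤ n → SyzPiece ![p0, p1, p2] 2 n = ⊥ := by
  intro n _
  refine (Submodule.eq_bot_iff _).mpr fun A hA => by_contra fun hA0 => ?_
  obtain ⟨hAhom, hsyz⟩ := mem_syzPiece_iff.mp hA
  have hp : ∀ i, Bihom (![p0, p1, p2] i) 2 1 := by
    intro i
    fin_cases i <;> assumption
  obtain ⟨c, hc0, hc⟩ := exists_proportional_of_syzygy hp hgen.finite_setOf_hasLinearFactor
    (N := n - 1) (by simpa using hAhom) hsyz hA0
  have hindep := Fintype.linearIndependent_iff.mp (hncz.linearIndependent two_pos h0 h1 h2)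
  exact hc0 (funext (hindep c (sum_smul_eq_zero_of_proportional hA0 hc hsyz)))
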